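/- arXiv:1502.06580 — 3 statements merged into one kernel-verified Lean document; each statement's English description precedes it below -/
import Mathlib

section
/- Let μ be the discrete measure Σⱼ (1−|zⱼ|²) δ_{zⱼ} associated to a finite uniformly separated sequence (z₁,…,zₙ) in the unit disk with separation constant δ_σ. Then sup over a ∈ supp(μ) of ∫_𝔻 |k_a(z)|² dμ(z) is at most 1 + 2 log(1/δ_σ), where k_a(z) = √(1−|a|²)/(1−\bar{a}z) is the normalized reproducing kernel. -/
open Complex Metric Set ComplexConjugate

/-- The `p`-integral mean of `f` on the circle of radius `r`. -/
noncomputable def circleMean (p : ℝ) (f : ℂ → ℂ) (r : ℝ) : ℝ :=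
  ((2 * Real.pi)⁻¹ *
      ∫ θ in (0:ℝ)..(2 * Real.pi),
        ‖f (r * Complex.exp (θ * Complex.I))‖ ^ p) ^ (1 / p)

/-- The Hardy space `H^p` norm of `f`. -/
noncomputable def hardyNorm (p : ℝ) (f : ℂ → ℂ) : ℝ :=
  sSup {m : ℝ | ∃ r : ℝ, 0 ≤ r ∧ r < 1 ∧ m = circleMean p f r}

/-- Membership in the Hardy space `H^p` of the unit disk. -/
def MemHp (p : ℝ) (f : ℂ → ℂ) : Prop :=
  DifferentiableOn ℂ f (ball (0:ℂ) 1) ∧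
    BddAbove {m : ℝ | ∃ r : ℝ, 0 ≤ r ∧ r < 1 ∧ m = circleMean p f r}

/-- The norm, in the dual space `(H^p)^*`, of a (not necessarily linear) functional `L`. -/
noncomputable def dualNormHp (p : ℝ) (L : (ℂ → ℂ) → ℂ) : ℝ :=
  sSup {m : ℝ | ∃ f : ℂ → ℂ, MemHp p f ∧ hardyNorm p f ≤ 1 ∧ m = ‖L f‖}

/-- The sup norm of `f` over the unit disk. -/
noncomputable def supNormDisk (f : ℂ → ℂ) : ℝ :=
  sSup {m : ℝ | ∃ z ∈ ball (0:ℂ) 1, m = ‖f z‖}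

/-- Membership in `H^∞`: bounded analytic functions on the unit disk. -/
def MemHinf (f : ℂ → ℂ) : Prop :=
  DifferentiableOn ℂ f (ball (0:ℂ) 1) ∧
    BddAbove {m : ℝ | ∃ z ∈ ball (0:ℂ) 1, m = ‖f z‖}

/-- The interpolation constant `κ_σ` of a finite sequence of points of the unit disk. -/
noncomputable def interpConst {n : ℕ} (z : Fin n → ℂ) : ℝ :=
  sSup {m : ℝ | ∃ a : Fin n → ℂ, (∀ j, ‖a j‖ ≤ 1) ∧
    m = sInf {t : ℝ | ∃ f : ℂ → ℂ, MemHinf f ∧ (∀ j, f (z j) = a j) ∧ t = supNormDisk f}}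

/-- The uniform separation constant `δ_σ` of a finite sequence of points of the unit disk. -/
noncomputable def sepConst {n : ℕ} (z : Fin n → ℂ) : ℝ :=
  sInf {m : ℝ | ∃ j : Fin n,
    m = ∏ k ∈ Finset.univ.filter (fun k => k ≠ j),
          ‖(z j - z k) / (1 - conj (z j) * z k)‖}


/-!
With `ρ(a, b) = |(a - b) / (1 - ā b)|` the pseudo-hyperbolic distance, the identity
`|1 - ā b|² - |a - b|² = (1 - |a|²)(1 - |b|²)` turns the `k`-th term of the sum into
`1 - ρ(z_j, z_k)²`. The term `k = j` is `1`, and for `k ≠ j` we have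
`1 - ρ² ≤ log (1 / ρ²)` (from `log x ≤ x - 1`), so the remaining terms add up to at most
`2 log (1 / ∏_{k ≠ j} ρ(z_j, z_k)) ≤ 2 log (1 / δ_σ)`.
-/

open Finset

noncomputable def pseudoHyperbolicDist (a b : ℂ) : ℝ :=
  ‖(a - b) / (1 - conj a * b)‖

noncomputable def normalizedSzegoKernel (a w : ℂ) : ℂ :=
  (Real.sqrt (1 - ‖a‖ ^ 2) : ℂ) / (1 - conj a * w)

lemma norm_one_sub_conj_mul_sq_sub_norm_sub_sq (a b : ℂ) :
    ‖1 - conj a * b‖ ^ 2 - ‖a - b‖ ^ 2 = (1 - ‖a‖ ^ 2) * (1 - ‖b‖ ^ 2) := by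
  simp only [← Complex.normSq_eq_norm_sq, Complex.normSq_apply, Complex.sub_re, Complex.sub_im,
    Complex.mul_re, Complex.mul_im, Complex.conj_re, Complex.conj_im, Complex.one_re,
    Complex.one_im]
  ring

lemma one_sub_conj_mul_ne_zero {a b : ℂ} (ha : ‖a‖ < 1) (hb : ‖b‖ < 1) :
    1 - conj a * b ≠ 0 := by
  have hlt : ‖conj a * b‖ < 1 := by
    rw [norm_mul, Complex.norm_conj]
    exact mul_lt_one_of_nonneg_of_lt_one_left (norm_nonneg a) ha hb.le
  exact sub_ne_zero.mpr fun h => hlt.ne (by rw [← h, norm_one])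

lemma pseudoHyperbolicDist_self (a : ℂ) : pseudoHyperbolicDist a a = 0 := by
  simp [pseudoHyperbolicDist]

lemma pseudoHyperbolicDist_pos {a b : ℂ} (ha : ‖a‖ < 1) (hb : ‖b‖ < 1) (hab : a ≠ b) :
    0 < pseudoHyperbolicDist a b :=
  norm_pos_iff.mpr (div_ne_zero (sub_ne_zero.mpr hab) (one_sub_conj_mul_ne_zero ha hb))

lemma one_sub_pseudoHyperbolicDist_sq {a b : ℂ} (ha : ‖a‖ < 1) (hb : ‖b‖ < 1) :
    1 - pseudoHyperbolicDist a b ^ 2 = (1 - ‖b‖ ^ 2) * ‖normalizedSzegoKernel a b‖ ^ 2 := by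
  have hd : ‖1 - conj a * b‖ ≠ 0 := norm_ne_zero_iff.mpr (one_sub_conj_mul_ne_zero ha hb)
  have ha' : 0 ≤ 1 - ‖a‖ ^ 2 := by nlinarith [norm_nonneg a]
  rw [pseudoHyperbolicDist, normalizedSzegoKernel, norm_div, norm_div, div_pow, div_pow,
    Complex.norm_real, Real.norm_eq_abs, sq_abs, Real.sq_sqrt ha', one_sub_div (pow_ne_zero 2 hd),
    norm_one_sub_conj_mul_sq_sub_norm_sub_sq]
  ring

lemma one_sub_sq_le_neg_two_mul_log {x : ℝ} (hx : 0 < x) : 1 - x ^ 2 ≤ -(2 * Real.log x) := by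
  have h := Real.log_le_sub_one_of_pos (pow_pos hx 2)
  rw [Real.log_pow] at h
  push_cast at h
  linarith

lemma sum_one_sub_sq_le_two_mul_log_inv_prod {ι : Type*} (s : Finset ι) (ρ : ι → ℝ)
    (hρ : ∀ k ∈ s, 0 < ρ k) :
    ∑ k ∈ s, (1 - ρ k ^ 2) ≤ 2 * Real.log (1 / ∏ k ∈ s, ρ k) := by
  rw [one_div, Real.log_inv, Real.log_prod fun k hk => (hρ k hk).ne', mul_neg, mul_sum,
    ← sum_neg_distrib]
  exact sum_le_sum fun k hk => one_sub_sq_le_neg_two_mul_log (hρ k hk)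

section sepConst

variable {n : ℕ} (z : Fin n → ℂ)

lemma sepConst_eq_iInf :
    sepConst z = ⨅ j, ∏ k ∈ univ.erase j, pseudoHyperbolicDist (z j) (z k) := by
  rw [sepConst, iInf]
  congr 1
  ext m
  simp only [Set.mem_ofPred_eq, Set.mem_range, filter_ne', pseudoHyperbolicDist, eq_comm]

lemma sepConst_le_prod (j : Fin n) :
    sepConst z ≤ ∏ k ∈ univ.erase j, pseudoHyperbolicDist (z j) (z k) := by
  rw [sepConst_eq_iInf]
  exact ciInf_le (Set.finite_range _).bddBelow j

lemma sepConst_pos [Nonempty (Fin n)] (hz : ∀ j, ‖z j‖ < 1) (hinj : Function.Injective z) :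
    0 < sepConst z := by
  obtain ⟨i, hi⟩ := exists_eq_ciInf_of_finite
    (f := fun j => ∏ k ∈ univ.erase j, pseudoHyperbolicDist (z j) (z k))
  rw [sepConst_eq_iInf, ← hi]
  exact prod_pos fun k hk =>
    pseudoHyperbolicDist_pos (hz i) (hz k) (hinj.ne (ne_of_mem_erase hk).symm)

end sepConst

theorem reproducing_kernel_test_discrete_measure_general (n : ℕ)
    (z : Fin n → ℂ) (hz : ∀ j, z j ∈ ball (0:ℂ) 1) (hdist : Function.Injective z)
    (j : Fin n) :
    ∑ k, (1 - ‖z k‖ ^ 2) *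
        ‖(Real.sqrt (1 - ‖z j‖ ^ 2) : ℂ) /
          (1 - conj (z j) * z k)‖ ^ 2 ≤
      1 + 2 * Real.log (1 / sepConst z) := by
  have hz' : ∀ k, ‖z k‖ < 1 := fun k => mem_ball_zero_iff.mp (hz k)
  have : Nonempty (Fin n) := ⟨j⟩
  set ρ := fun k => pseudoHyperbolicDist (z j) (z k)
  have hρ : ∀ k ∈ univ.erase j, 0 < ρ k := fun k hk =>
    pseudoHyperbolicDist_pos (hz' j) (hz' k) (hdist.ne (ne_of_mem_erase hk).symm)
  calc ∑ k, (1 - ‖z k‖ ^ 2) * ‖normalizedSzegoKernel (z j) (z k)‖ ^ 2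
      = ∑ k, (1 - ρ k ^ 2) :=
        sum_congr rfl fun k _ => (one_sub_pseudoHyperbolicDist_sq (hz' j) (hz' k)).symm
    _ = 1 + ∑ k ∈ univ.erase j, (1 - ρ k ^ 2) := by
        rw [← add_sum_erase _ _ (mem_univ j), show ρ j = 0 from pseudoHyperbolicDist_self _]
        ring
    _ ≤ 1 + 2 * Real.log (1 / ∏ k ∈ univ.erase j, ρ k) := by
        grw [sum_one_sub_sq_le_two_mul_log_inv_prod _ ρ hρ]
    _ ≤ 1 + 2 * Real.log (1 / sepConst z) := by
        have := sepConst_pos z hz' hdist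
        have := prod_pos hρ
        gcongr
        exact sepConst_le_prod z j

/-- For the discrete measure `μ = ∑ₖ (1−|zₖ|²) δ_{zₖ}` of a finite uniformly separated sequence,
the integrals of the squared normalized reproducing kernels `k_a`, `a ∈ supp μ`, are bounded by
`1 + 2 log(1/δ_σ)`. -/
theorem reproducing_kernel_test_discrete_measure (n : ℕ) (hn : 0 < n)
    (z : Fin n → ℂ) (hz : ∀ j, z j ∈ ball (0:ℂ) 1) (hdist : Function.Injective z)
    (j : Fin n) :
    ∑ k, (1 - ‖z k‖ ^ 2) *
        ‖(Real.sqrt (1 - ‖z j‖ ^ 2) : ℂ) /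
          (1 - conj (z j) * z k)‖ ^ 2 ≤
      1 + 2 * Real.log (1 / sepConst z) :=
  reproducing_kernel_test_discrete_measure_general n z hz hdist j
end

section
/- For θ ∈ (0,1), 0 < σ < 1, and u = 1 − σ^j (j ≥ 1), the lens map λ_θ satisfies (1−u)/(1−λ_θ(u)) ≥ (σ^j/2)^{1−θ}. -/
open Complex Metric Set

/-- The lens map of parameter `θ`, defined with principal powers. -/
noncomputable def lensMap (θ : ℝ) (z : ℂ) : ℂ :=
  ((1 + z) ^ (θ : ℂ) - (1 - z) ^ (θ : ℂ)) / ((1 + z) ^ (θ : ℂ) + (1 - z) ^ (θ : ℂ))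

lemma rpow_subadd {a b θ : ℝ} (ha : 0 ≤ a) (hb : 0 ≤ b) (h0 : 0 ≤ θ) (h1 : θ ≤ 1) :
    (a + b) ^ θ ≤ a ^ θ + b ^ θ := by
  lift a to NNReal using ha
  lift b to NNReal using hb
  have := NNReal.rpow_add_le_add_rpow a b h0 h1
  exact_mod_cast this

/-- For `u = 1 − σ^j`, the lens map satisfies `(1−u)/(1−λ_θ(u)) ≥ (σ^j/2)^{1−θ}`.
(For real `u ∈ [0,1)` the value `λ_θ(u)` is real, and we state the inequality for
its real part.) -/
theorem lensMap_ratio_lower_bound (θ σ : ℝ) (hθ : θ ∈ Set.Ioo (0:ℝ) 1)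
    (hσ : σ ∈ Set.Ioo (0:ℝ) 1) (j : ℕ) (hj : 1 ≤ j) (u : ℝ) (hu : u = 1 - σ ^ j) :
    (σ ^ j / 2) ^ (1 - θ) ≤ (1 - u) / (1 - (lensMap θ (u : ℂ)).re) := by
  obtain ⟨hθ0, hθ1⟩ := hθ
  obtain ⟨hσ0, hσ1⟩ := hσ
  set s : ℝ := σ ^ j with hs_def
  have hs0 : 0 < s := pow_pos hσ0 j
  have hs1 : s < 1 := pow_lt_one₀ hσ0.le hσ1 (by omega)
  set A : ℝ := (2 - s) ^ θ with hA_def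
  set B : ℝ := s ^ θ with hB_def
  have h2s : (0:ℝ) < 2 - s := by linarith
  have hA0 : 0 < A := Real.rpow_pos_of_pos h2s θ
  have hB0 : 0 < B := Real.rpow_pos_of_pos hs0 θ
  -- compute the real part of lensMap
  have h1u : (1 : ℂ) + (u : ℂ) = ((2 - s : ℝ) : ℂ) := by
    rw [hu]; push_cast; ring
  have h1u' : (1 : ℂ) - (u : ℂ) = ((s : ℝ) : ℂ) := by
    rw [hu]; push_cast; ring
  have hlens : (lensMap θ (u : ℂ)).re = (A - B) / (A + B) := by
    rw [lensMap, h1u, h1u']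
    rw [← Complex.ofReal_cpow h2s.le, ← Complex.ofReal_cpow hs0.le]
    rw [← hA_def, ← hB_def]
    push_cast
    rw [← Complex.ofReal_sub, ← Complex.ofReal_add, ← Complex.ofReal_div,
      Complex.ofReal_re]
  have hdenom : 1 - (lensMap θ (u : ℂ)).re = 2 * B / (A + B) := by
    rw [hlens]; field_simp; ring
  rw [hdenom, hu]
  have h1u2 : 1 - (1 - s) = s := by ring
  rw [h1u2]
  rw [div_div_eq_mul_div, le_div_iff₀ (by positivity)]
  -- goal: (s/2)^(1-θ) * (2*B) ≤ s * (A+B)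
  have hsub : (2:ℝ) ^ θ ≤ A + B := by
    have := rpow_subadd h2s.le hs0.le hθ0.le hθ1.le
    simpa [hA_def, hB_def] using this
  have hpow : (s / 2) ^ (1 - θ) * (2 * B) = s * 2 ^ θ := by
    rw [Real.div_rpow hs0.le (by norm_num), Real.rpow_sub hs0, Real.rpow_sub (by norm_num),
      Real.rpow_one, Real.rpow_one, hB_def]
    field_simp
  rw [hpow]
  exact mul_le_mul_of_nonneg_left hsub hs0.le
end

section
/- Let ω : [0,1] → [0,2] be a concave increasing modulus of continuity with ω(0) = 0, let φ : 𝔻 → 𝔻 be analytic, real-valued on (−1,1), with 1 − φ(r) ≤ ω(1−r) for 0 ≤ r < 1 and φ(0) < 1. Fix 0 < σ < 1 and define u₀ = 0 and, inductively, uⱼ₊₁ ∈ (uⱼ, 1) with 1 − φ(uⱼ₊₁) = σ(1 − φ(uⱼ)) (possible by the intermediate value theorem since φ(r) → 1 as r → 1). Then with vⱼ = φ(uⱼ) and a = 1 − φ(0), one has 1 − vₙ = a σⁿ and (1−uⱼ²)/(1−vⱼ²) ≥ (1/2) ω^{-1}(a σⁿ)/(a σⁿ) for 1 ≤ j ≤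 n. -/
open Complex Metric Set

/-! Since `1 - φ(uⱼ)` is multiplied by `σ` at each step, `1 - vⱼ = aσʲ`. The radial bound
`aσʲ ≤ ω(1 - uⱼ)` gives `ω⁻¹(aσʲ) ≤ 1 - uⱼ`, and as `ω⁻¹` is convex with `ω⁻¹(0) = 0`, the
ratio `ω⁻¹(y)/y` increases with `y`; hence `ω⁻¹(aσⁿ)/(aσⁿ) ≤ (1 - uⱼ)/(1 - vⱼ)` for `j ≤ n`.
Passing to `(1 - uⱼ²)/(1 - vⱼ²)` costs the factor `1/2` because `1 + vⱼ ≤ 2 ≤ 2(1 + uⱼ)`. -/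

theorem ConcaveOn.smul_apply_le_apply_smul {𝕜 E β : Type*} [Ring 𝕜] [PartialOrder 𝕜]
    [IsOrderedRing 𝕜] [AddCommMonoid E] [Module 𝕜 E] [AddCommMonoid β] [PartialOrder β]
    [Module 𝕜 β] {s : Set E} {f : E → β} (hf : ConcaveOn 𝕜 s f) (h0 : (0 : E) ∈ s)
    (hf0 : f 0 = 0) {x : E} (hx : x ∈ s) {c : 𝕜} (hc0 : 0 ≤ c) (hc1 : c ≤ 1) :
    c • f x ≤ f (c • x) := by
  simpa [hf0] using hf.2 hx h0 hc0 (sub_nonneg.2 hc1) (add_sub_cancel c 1)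

namespace Set.LeftInvOn

variable {f g : ℝ → ℝ} {a b : ℝ}

theorem mem_Icc_and_rightInv_of_continuousOn (hg : LeftInvOn g f (Icc a b)) (hab : a ≤ b)
    (hf : ContinuousOn f (Icc a b)) {y : ℝ} (hy : y ∈ Icc (f a) (f b)) :
    g y ∈ Icc a b ∧ f (g y) = y := by
  obtain ⟨x, hx, rfl⟩ := intermediate_value_Icc hab hf hy
  rw [hg hx]
  exact ⟨hx, rfl⟩

theorem le_iff_le_apply (hg : LeftInvOn g f (Icc a b)) (hab : a ≤ b)
    (hf : ContinuousOn f (Icc a b)) (hmono : MonotoneOn f (Icc a b)) {y r : ℝ}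
    (hy : y ∈ Icc (f a) (f b)) (hr : r ∈ Icc a b) : g y ≤ r ↔ y ≤ f r := by
  obtain ⟨hgy, hfgy⟩ := hg.mem_Icc_and_rightInv_of_continuousOn hab hf hy
  conv_rhs => rw [← hfgy]
  exact ((hmono.strictMonoOn_of_injOn hg.injOn).le_iff_le hgy hr).symm

end Set.LeftInvOn

theorem leftInv_div_le_leftInv_div_of_concaveOn {ω ωinv : ℝ → ℝ}
    (hmono : MonotoneOn ω (Icc 0 1)) (hconc : ConcaveOn ℝ (Icc 0 1) ω)
    (hcont : ContinuousOn ω (Icc 0 1)) (hω0 : ω 0 = 0) (hinv : LeftInvOn ωinv ω (Icc 0 1))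
    {s t : ℝ} (hs : 0 < s) (hst : s ≤ t) (ht : t ≤ ω 1) : ωinv s / s ≤ ωinv t / t := by
  have ht0 : 0 < t := hs.trans_le hst
  obtain ⟨hx, hωx⟩ := hinv.mem_Icc_and_rightInv_of_continuousOn zero_le_one hcont
    (show t ∈ Icc (ω 0) (ω 1) by rw [hω0]; exact ⟨ht0.le, ht⟩)
  set c := s / t
  have hc : c * t = s := div_mul_cancel₀ s ht0.ne'
  have hc0 : 0 < c := by positivity
  have hc1 : c ≤ 1 := div_le_one_of_le₀ hst ht0.le
  have hcx : c * ωinv t ∈ Icc (0 : ℝ) 1 :=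
    ⟨mul_nonneg hc0.le hx.1, mul_le_one₀ hc1 hx.1 hx.2⟩
  have hs_le : s ≤ ω (c * ωinv t) :=
    calc s = c * ω (ωinv t) := by rw [hωx, hc]
      _ ≤ ω (c * ωinv t) :=
        hconc.smul_apply_le_apply_smul ⟨le_rfl, zero_le_one⟩ hω0 hx hc0.le hc1
  have hs_inv : ωinv s ≤ c * ωinv t :=
    (hinv.le_iff_le_apply zero_le_one hcont hmono
      (by rw [hω0]; exact ⟨hs.le, hst.trans ht⟩) hcx).2 hs_le
  calc ωinv s / s ≤ c * ωinv t / s := by gcongr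
    _ = ωinv t / t := by rw [← hc, mul_div_mul_left _ _ hc0.ne']

theorem leftInv_div_le_div_of_le_apply {ω ωinv : ℝ → ℝ}
    (hmono : MonotoneOn ω (Icc 0 1)) (hconc : ConcaveOn ℝ (Icc 0 1) ω)
    (hcont : ContinuousOn ω (Icc 0 1)) (hω0 : ω 0 = 0) (hinv : LeftInvOn ωinv ω (Icc 0 1))
    {s t r : ℝ} (hs : 0 < s) (hst : s ≤ t) (hr : r ∈ Icc 0 1) (htr : t ≤ ω r) :
    ωinv s / s ≤ r / t := by
  have ht : t ≤ ω 1 := htr.trans (hmono hr ⟨zero_le_one, le_rfl⟩ hr.2)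
  have hinv_le : ωinv t ≤ r :=
    (hinv.le_iff_le_apply zero_le_one hcont hmono
      (by rw [hω0]; exact ⟨hs.le.trans hst, ht⟩) hr).2 htr
  calc ωinv s / s ≤ ωinv t / t :=
        leftInv_div_le_leftInv_div_of_concaveOn hmono hconc hcont hω0 hinv hs hst ht
    _ ≤ r / t := div_le_div_of_nonneg_right hinv_le (hs.le.trans hst)

theorem half_mul_one_sub_div_le_one_sub_sq_div {x y : ℝ} (hx0 : 0 ≤ x) (hx1 : x ≤ 1)
    (hy : |y| < 1) : 1 / 2 * ((1 - x) / (1 - y)) ≤ (1 - x ^ 2) / (1 - y ^ 2) := by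
  obtain ⟨hy₁, hy₂⟩ := abs_lt.1 hy
  rw [← mul_div_assoc, div_le_div_iff₀ (by nlinarith) (by nlinarith)]
  nlinarith [mul_nonneg (sub_nonneg.2 hx1) (sub_nonneg.2 hy₂.le)]

theorem omega_radial_points_estimate_general
    (ω ωinv : ℝ → ℝ)
    (hω_mono : MonotoneOn ω (Set.Icc (0:ℝ) 1))
    (hω_concave : ConcaveOn ℝ (Set.Icc (0:ℝ) 1) ω)
    (hω_cont : ContinuousOn ω (Set.Icc (0:ℝ) 1))
    (hω_zero : ω 0 = 0)
    (hωinv_left : ∀ x ∈ Set.Icc (0:ℝ) 1, ωinv (ω x) = x)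
    (φ : ℂ → ℂ)
    (hφm : MapsTo φ (ball (0:ℂ) 1) (ball (0:ℂ) 1))
    (hφ_radial : ∀ r : ℝ, 0 ≤ r → r < 1 → 1 - (φ (r : ℂ)).re ≤ ω (1 - r))
    (hφ0 : (φ 0).re < 1)
    (σ : ℝ) (hσ : σ ∈ Set.Ioo (0:ℝ) 1)
    (u : ℕ → ℝ) (hu0 : u 0 = 0)
    (hu_incr : ∀ j : ℕ, u j < u (j + 1))
    (hu_lt : ∀ j : ℕ, u j < 1)
    (hu_rec : ∀ j : ℕ, 1 - (φ ((u (j + 1) : ℝ) : ℂ)).re = σ * (1 - (φ ((u j : ℝ) : ℂ)).re))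
    (a : ℝ) (ha : a = 1 - (φ 0).re)
    (n : ℕ) :
    1 - (φ ((u n : ℝ) : ℂ)).re = a * σ ^ n ∧
      ∀ j : ℕ, 1 ≤ j → j ≤ n →
        (1 / 2) * (ωinv (a * σ ^ n) / (a * σ ^ n)) ≤
          (1 - (u j) ^ 2) / (1 - ((φ ((u j : ℝ) : ℂ)).re) ^ 2) := by
  obtain ⟨hσ0, hσ1⟩ := hσ
  have hu_nonneg (j : ℕ) : 0 ≤ u j :=
    hu0 ▸ monotone_nat_of_le_succ (fun k => (hu_incr k).le) j.zero_le
  have hv (j : ℕ) : 1 - (φ (u j)).re = a * σ ^ j := by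
    induction j with
    | zero => simp [hu0, ha]
    | succ k ih => rw [hu_rec k, ih, pow_succ]; ring
  refine ⟨hv n, fun j _ hjn => ?_⟩
  have hvj : |(φ (u j)).re| < 1 := (abs_re_le_norm _).trans_lt <| mem_ball_zero_iff.1 <|
    hφm <| by simpa [abs_of_nonneg (hu_nonneg j)] using hu_lt j
  have hr : 1 - u j ∈ Icc (0 : ℝ) 1 := ⟨by linarith [hu_lt j], by linarith [hu_nonneg j]⟩
  have hrad : a * σ ^ j ≤ ω (1 - u j) := hv j ▸ hφ_radial (u j) (hu_nonneg j) (hu_lt j)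
  have ha0 : 0 < a := by linarith
  have hσn_le_σj : a * σ ^ n ≤ a * σ ^ j :=
    mul_le_mul_of_nonneg_left (pow_le_pow_of_le_one hσ0.le hσ1.le hjn) ha0.le
  calc 1 / 2 * (ωinv (a * σ ^ n) / (a * σ ^ n))
      ≤ 1 / 2 * ((1 - u j) / (1 - (φ (u j)).re)) := by
        rw [hv j]
        gcongr 1 / 2 * ?_
        exact leftInv_div_le_div_of_le_apply hω_mono hω_concave hω_cont hω_zero hωinv_left
          (by positivity) hσn_le_σj hr hrad
    _ ≤ _ := half_mul_one_sub_div_le_one_sub_sq_div (hu_nonneg j) (hu_lt j).le hvj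

/-- For an `ω`-radial symbol `φ` and the points `uⱼ` defined inductively by
`1 − φ(u_{j+1}) = σ(1 − φ(uⱼ))`, with `vⱼ = φ(uⱼ)` and `a = 1 − φ(0)`, one has
`1 − vₙ = a σⁿ` and `(1−uⱼ²)/(1−vⱼ²) ≥ (1/2) ω^{-1}(aσⁿ)/(aσⁿ)` for `1 ≤ j ≤ n`. -/
theorem omega_radial_points_estimate
    (ω ωinv : ℝ → ℝ)
    (hω_mono : MonotoneOn ω (Set.Icc (0:ℝ) 1))
    (hω_concave : ConcaveOn ℝ (Set.Icc (0:ℝ) 1) ω)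
    (hω_cont : ContinuousOn ω (Set.Icc (0:ℝ) 1))
    (hω_zero : ω 0 = 0)
    (hω_range : Set.MapsTo ω (Set.Icc (0:ℝ) 1) (Set.Icc (0:ℝ) 2))
    (hωinv_left : ∀ x ∈ Set.Icc (0:ℝ) 1, ωinv (ω x) = x)
    (hωinv_right : ∀ y ∈ Set.Icc (0:ℝ) (ω 1), ω (ωinv y) = y)
    (φ : ℂ → ℂ)
    (hφd : DifferentiableOn ℂ φ (ball (0:ℂ) 1))
    (hφm : MapsTo φ (ball (0:ℂ) 1) (ball (0:ℂ) 1))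
    (hφ_real : ∀ x : ℝ, -1 < x → x < 1 → (φ (x : ℂ)).im = 0)
    (hφ_radial : ∀ r : ℝ, 0 ≤ r → r < 1 → 1 - (φ (r : ℂ)).re ≤ ω (1 - r))
    (hφ0 : (φ 0).re < 1)
    (σ : ℝ) (hσ : σ ∈ Set.Ioo (0:ℝ) 1)
    (u : ℕ → ℝ) (hu0 : u 0 = 0)
    (hu_incr : ∀ j : ℕ, u j < u (j + 1))
    (hu_lt : ∀ j : ℕ, u j < 1)
    (hu_rec : ∀ j : ℕ, 1 - (φ ((u (j + 1) : ℝ) : ℂ)).re = σ * (1 - (φ ((u j : ℝ) : ℂ)).re))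
    (a : ℝ) (ha : a = 1 - (φ 0).re)
    (n : ℕ) (hn : 1 ≤ n) :
    1 - (φ ((u n : ℝ) : ℂ)).re = a * σ ^ n ∧
      ∀ j : ℕ, 1 ≤ j → j ≤ n →
        (1 / 2) * (ωinv (a * σ ^ n) / (a * σ ^ n)) ≤
          (1 - (u j) ^ 2) / (1 - ((φ ((u j : ℝ) : ℂ)).re) ^ 2) :=
  omega_radial_points_estimate_general ω ωinv hω_mono hω_concave hω_cont hω_zero hωinv_left φ hφm
    hφ_radial hφ0 σ hσ u hu0 hu_incr hu_lt hu_rec a ha n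
end
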